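/- arXiv:1206.6172 — 2 statements merged into one kernel-verified Lean document; each statement's English description precedes it below -/
import Mathlib

section
/- With the same notation, the residual magnitude satisfies the uniform bound |R_N(y)| ≤ 2^κ exp(η²) exp(-y/(2λ)) for all y ≥ 0 and all N ≥ κ-2; in particular lim_{y→∞} |R_N(y)| = 0. -/
/-!
Every summand of `R_N` is nonpositive, so `|R_N(y)|` is at most the tail of a series of
nonnegative terms. Writing `(η²/λ)^j / j! = (2η²)^j / j! · (2λ)^{-j} ≤ e^{2η²} (2λ)^{-j}`
bounds each term by `e^{2η²} (2λ)^κ` times a term of the Taylor series in `s` of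
`g(s, y) = e^{ys} / (s - 1/λ)` at `s = 1/(2λ)`, with the sign reversed; the whole series
sums to `2λ e^{y/(2λ)}`, and the prefactor `e^{-η²} λ^{-κ} e^{-y/λ}` turns this into
`2^κ e^{η²} e^{-y/(2λ)}`.
-/

open Finset

/-- `g⁽ⁿ⁾(0,y) = -λ ∑_{k=0}^n (n!/(n-k)!) λ^k y^{n-k}`. -/
noncomputable def gd (lam y : ℝ) (n : ℕ) : ℝ :=
  -lam * ∑ k ∈ Finset.range (n + 1),
      ((n.factorial : ℝ) / ((n - k).factorial : ℝ)) * lam ^ k * y ^ (n - k)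

/-- The `n`-th summand `g⁽ⁿ⁾(0,y) (η²/λ)^{n-κ+1} / (n! (n-κ+1)!)` (ℕ-subtraction:
`n - κ + 1` is written `n + 1 - κ`, which agrees for the relevant `n ≥ κ - 1`). -/
noncomputable def trm (lam η y : ℝ) (kap n : ℕ) : ℝ :=
  gd lam y n * (η ^ 2 / lam) ^ (n + 1 - kap)
    / ((n.factorial : ℝ) * ((n + 1 - kap).factorial : ℝ))

/-- `R_N(y) = (e^{-η²}/λ^κ) e^{-y/λ} ∑_{n=N+1}^∞ g⁽ⁿ⁾(0,y)(η²/λ)^{n-κ+1}/(n!(n-κ+1)!)`. -/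
noncomputable def Rres (lam η : ℝ) (kap N : ℕ) (y : ℝ) : ℝ :=
  Real.exp (-η ^ 2) / lam ^ kap * Real.exp (-y / lam)
    * ∑' n : ℕ, trm lam η y kap (N + 1 + n)

lemma gd_nonpos {lam y : ℝ} (hlam : 0 ≤ lam) (hy : 0 ≤ y) (n : ℕ) : gd lam y n ≤ 0 := by
  rw [gd, neg_mul]
  exact neg_nonpos.mpr (mul_nonneg hlam (sum_nonneg fun k _ => by positivity))

lemma trm_nonpos {lam y : ℝ} (hlam : 0 ≤ lam) (hy : 0 ≤ y) (η : ℝ) (kap n : ℕ) :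
    trm lam η y kap n ≤ 0 :=
  div_nonpos_of_nonpos_of_nonneg
    (mul_nonpos_of_nonpos_of_nonneg (gd_nonpos hlam hy n) (by positivity)) (by positivity)

lemma gd_mul_pow_div_factorial (lam y s : ℝ) (n : ℕ) :
    gd lam y n * s ^ n / n.factorial
      = ∑ k ∈ range (n + 1),
          -lam * (lam * s) ^ k * ((y * s) ^ (n - k) / (n - k).factorial) := by
  rw [gd, mul_sum, sum_mul, sum_div]
  refine sum_congr rfl fun k hk => ?_
  have hs : s ^ n = s ^ k * s ^ (n - k) := by
    rw [← pow_add, Nat.add_sub_cancel' (Nat.lt_succ_iff.mp (mem_range.mp hk))]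
  rw [hs]
  field_simp
  ring

/-- The Taylor series of `g(s, y) = e^{ys} / (s - 1/λ)` in `s`. -/
lemma hasSum_gd_mul_pow_div_factorial {lam s : ℝ} (h : ‖lam * s‖ < 1) (y : ℝ) :
    HasSum (fun n => gd lam y n * s ^ n / n.factorial)
      (-lam * Real.exp (y * s) / (1 - lam * s)) := by
  have hgeom := (hasSum_geometric_of_norm_lt_one h).mul_left (-lam)
  have hexp : HasSum (fun m => (y * s) ^ m / m.factorial) (Real.exp (y * s)) := by
    rw [Real.exp_eq_exp_ℝ]
    exact NormedSpace.expSeries_div_hasSum_exp _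
  have hgeom_norm : Summable fun k => ‖-lam * (lam * s) ^ k‖ := by
    simpa only [norm_mul, norm_pow] using
      (summable_geometric_of_lt_one (norm_nonneg _) h).mul_left ‖-lam‖
  have hcauchy := hasSum_sum_range_mul_of_summable_norm hgeom_norm
    (NormedSpace.norm_expSeries_div_summable (y * s))
  rw [hgeom.tsum_eq, hexp.tsum_eq] at hcauchy
  simp only [← gd_mul_pow_div_factorial] at hcauchy
  rwa [div_eq_mul_inv, mul_right_comm]

lemma hasSum_inv_two_mul_pow_succ_mul_neg_gd {lam : ℝ} (hlam : 0 < lam) (y : ℝ) :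
    HasSum (fun m => (2 * lam)⁻¹ ^ (m + 1) * (-gd lam y m / m.factorial))
      (Real.exp (y / (2 * lam))) := by
  have hhalf : lam * (2 * lam)⁻¹ = 2⁻¹ := by
    field_simp
  have h : ‖lam * (2 * lam)⁻¹‖ < 1 := by
    rw [hhalf, Real.norm_eq_abs, abs_of_pos (by norm_num)]
    norm_num
  have hterm : ∀ m : ℕ, (2 * lam)⁻¹ ^ (m + 1) * (-gd lam y m / m.factorial)
      = -(2 * lam)⁻¹ * (gd lam y m * (2 * lam)⁻¹ ^ m / m.factorial) := fun m => by ring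
  have hvalue : -(2 * lam)⁻¹ * (-lam * Real.exp (y * (2 * lam)⁻¹) / (1 - lam * (2 * lam)⁻¹))
      = Real.exp (y / (2 * lam)) := by
    rw [hhalf, ← div_eq_mul_inv]
    field_simp
    norm_num
  simpa only [hterm, hvalue] using (hasSum_gd_mul_pow_div_factorial h y).mul_left (-(2 * lam)⁻¹)

lemma pow_div_factorial_le_exp_mul_mul_inv_pow {x t : ℝ} (hx : 0 ≤ x) (ht : 0 < t) (j : ℕ) :
    x ^ j / j.factorial ≤ Real.exp (x * t) * t⁻¹ ^ j := by
  calc x ^ j / j.factorial = (x * t) ^ j / j.factorial * t⁻¹ ^ j := by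
        rw [mul_pow, mul_div_right_comm, mul_assoc, ← mul_pow, mul_inv_cancel₀ ht.ne', one_pow,
          mul_one]
    _ ≤ Real.exp (x * t) * t⁻¹ ^ j := by
        gcongr
        exact Real.pow_div_factorial_le_exp _ (by positivity) j

lemma neg_trm_le {lam y : ℝ} (hlam : 0 < lam) (hy : 0 ≤ y) (η : ℝ) {kap m : ℕ}
    (hm : kap ≤ m + 1) :
    -trm lam η y kap m
      ≤ Real.exp (2 * η ^ 2) * (2 * lam) ^ kap
          * ((2 * lam)⁻¹ ^ (m + 1) * (-gd lam y m / m.factorial)) := by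
  set j := m + 1 - kap
  have hsplit :
      -trm lam η y kap m = (η ^ 2 / lam) ^ j / j.factorial * (-gd lam y m / m.factorial) := by
    rw [trm]
    ring
  have hexp : η ^ 2 / lam * (2 * lam) = 2 * η ^ 2 := by
    field_simp
  have hpow : (2 * lam) ^ kap * (2 * lam)⁻¹ ^ (m + 1) = (2 * lam)⁻¹ ^ j := by
    rw [show m + 1 = kap + j by omega, pow_add, ← mul_assoc, ← mul_pow,
      mul_inv_cancel₀ (by positivity), one_pow, one_mul]
  have hcoeff := pow_div_factorial_le_exp_mul_mul_inv_pow (x := η ^ 2 / lam)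
    (by positivity) (by positivity : 0 < 2 * lam) j
  rw [hexp, ← hpow] at hcoeff
  rw [hsplit, mul_assoc, ← mul_assoc ((2 * lam) ^ kap), ← mul_assoc]
  exact mul_le_mul_of_nonneg_right hcoeff (div_nonneg (neg_nonneg.mpr (gd_nonpos hlam.le hy m))
    (by positivity))

lemma abs_tsum_trm_le {lam y : ℝ} (hlam : 0 < lam) (hy : 0 ≤ y) (η : ℝ) {kap N : ℕ}
    (hN : kap ≤ N + 2) :
    |∑' n, trm lam η y kap (N + 1 + n)|
      ≤ Real.exp (2 * η ^ 2) * (2 * lam) ^ kap * Real.exp (y / (2 * lam)) := by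
  set C := Real.exp (2 * η ^ 2) * (2 * lam) ^ kap
  have hmajorant := (hasSum_inv_two_mul_pow_succ_mul_neg_gd hlam y).mul_left C
  have hmajorant_nonneg :
      ∀ m : ℕ, 0 ≤ C * ((2 * lam)⁻¹ ^ (m + 1) * (-gd lam y m / m.factorial)) :=
    fun m => mul_nonneg (by positivity) (mul_nonneg (by positivity)
      (div_nonneg (neg_nonneg.mpr (gd_nonpos hlam.le hy m)) (by positivity)))
  have hshift : Function.Injective fun n : ℕ => N + 1 + n := fun a b h => by simpa using h
  have hle : ∀ n, -trm lam η y kap (N + 1 + n)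
      ≤ C * ((2 * lam)⁻¹ ^ (N + 1 + n + 1)
        * (-gd lam y (N + 1 + n) / (N + 1 + n).factorial)) :=
    fun n => neg_trm_le hlam hy η (by omega)
  have hsummable : Summable fun n => -trm lam η y kap (N + 1 + n) :=
    (hmajorant.summable.comp_injective hshift).of_nonneg_of_le
      (fun n => neg_nonneg.mpr (trm_nonpos hlam.le hy η kap _)) hle
  rw [abs_of_nonpos (tsum_nonpos fun n => trm_nonpos hlam.le hy η kap _), ← tsum_neg,
    ← hmajorant.tsum_eq]
  exact hsummable.tsum_le_tsum_of_inj _ hshift (fun m _ => hmajorant_nonneg m) hle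
    hmajorant.summable

lemma abs_Rres_le {lam y : ℝ} (hlam : 0 < lam) (hy : 0 ≤ y) (η : ℝ) {kap N : ℕ}
    (hN : kap ≤ N + 2) :
    |Rres lam η kap N y| ≤ 2 ^ kap * Real.exp (η ^ 2) * Real.exp (-y / (2 * lam)) := by
  have hpre : 0 ≤ Real.exp (-η ^ 2) / lam ^ kap * Real.exp (-y / lam) := by positivity
  calc |Rres lam η kap N y|
      = Real.exp (-η ^ 2) / lam ^ kap * Real.exp (-y / lam)
          * |∑' n, trm lam η y kap (N + 1 + n)| := by
        rw [Rres, abs_mul, abs_of_nonneg hpre]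
    _ ≤ Real.exp (-η ^ 2) / lam ^ kap * Real.exp (-y / lam)
          * (Real.exp (2 * η ^ 2) * (2 * lam) ^ kap * Real.exp (y / (2 * lam))) :=
        mul_le_mul_of_nonneg_left (abs_tsum_trm_le hlam hy η hN) hpre
    _ = 2 ^ kap * Real.exp (η ^ 2) * Real.exp (-y / (2 * lam)) := by
        rw [show Real.exp (η ^ 2) = Real.exp (-η ^ 2) * Real.exp (2 * η ^ 2) by
            rw [← Real.exp_add]; ring_nf,
          show Real.exp (-y / (2 * lam)) = Real.exp (-y / lam) * Real.exp (y / (2 * lam)) by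
            rw [← Real.exp_add]; ring_nf, mul_pow]
        field_simp

lemma tendsto_abs_Rres_atTop {lam : ℝ} (hlam : 0 < lam) (η : ℝ) {kap N : ℕ}
    (hN : kap ≤ N + 2) :
    Filter.Tendsto (fun y => |Rres lam η kap N y|) Filter.atTop (nhds 0) := by
  have hdecay : Filter.Tendsto
      (fun y : ℝ => 2 ^ kap * Real.exp (η ^ 2) * Real.exp (-y / (2 * lam)))
      Filter.atTop (nhds 0) := by
    simpa using (Real.tendsto_exp_atBot.comp (Filter.tendsto_neg_atTop_atBot.atBot_div_const
      (by positivity : 0 < 2 * lam))).const_mul (2 ^ kap * Real.exp (η ^ 2))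
  refine squeeze_zero' (Filter.Eventually.of_forall fun y => abs_nonneg _) ?_ hdecay
  filter_upwards [Filter.eventually_ge_atTop 0] with y hy
  exact abs_Rres_le hlam hy η hN

theorem stmt7_general (lam η : ℝ) (hlam : 0 < lam) (kap : ℕ) :
    (∀ N : ℕ, kap ≤ N + 2 → ∀ y : ℝ, 0 ≤ y →
        |Rres lam η kap N y|
          ≤ 2 ^ kap * Real.exp (η ^ 2) * Real.exp (-y / (2 * lam)))
    ∧ (∀ N : ℕ, kap ≤ N + 2 →
        Filter.Tendsto (fun y : ℝ => |Rres lam η kap N y|) Filter.atTop (nhds 0)) :=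
  ⟨fun _ hN _ hy => abs_Rres_le hlam hy η hN, fun _ hN => tendsto_abs_Rres_atTop hlam η hN⟩

/-- Uniform residual bound `|R_N(y)| ≤ 2^κ e^{η²} e^{-y/(2λ)}` for all `y ≥ 0` and
all `N ≥ κ-2`; in particular `|R_N(y)| → 0` as `y → ∞`. -/
theorem stmt7 (lam η : ℝ) (hlam : 0 < lam) (hη : 0 ≤ η) (kap : ℕ) (hkap : 1 ≤ kap)
    (hsum : ∀ y : ℝ, 0 ≤ y → Summable (fun n : ℕ => trm lam η y kap n)) :
    (∀ N : ℕ, kap ≤ N + 2 → ∀ y : ℝ, 0 ≤ y →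
        |Rres lam η kap N y|
          ≤ 2 ^ kap * Real.exp (η ^ 2) * Real.exp (-y / (2 * lam)))
    ∧ (∀ N : ℕ, kap ≤ N + 2 →
        Filter.Tendsto (fun y : ℝ => |Rres lam η kap N y|) Filter.atTop (nhds 0)) :=
  stmt7_general lam η hlam kap
end

section
/- The derivative of the residual with respect to y is ∂R_N(y)/∂y = (exp(-η²)/λ^κ) exp(-y/λ) Σ_{n=N+1}^{∞} (η²/λ)^{n-κ+1} y^n / (n!(n-κ+1)!), which is nonnegative for y ≥ 0 (strictly positive when y > 0 and η > 0); hence |R_N(y)| is monotonically non-increasing in y. -/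
open Finset

/-!
Write `x = y/λ` and `eₙ(x) = ∑_{j ≤ n} xʲ/j!` for the truncated exponential. Then
`g⁽ⁿ⁾(0,y) = -λⁿ⁺¹ n! eₙ(x)`, so `R_N(y) = -e^{-η²} ∑_j w_j e^{-x} e_{N+1+j}(x)` with summable
weights `w_j = (η²)^{N+j+2-κ}/(N+j+2-κ)! ≥ 0`. Since `(e^{-x} eₙ(x))' = -e^{-x} xⁿ/n!` and these
derivatives are bounded by `e^{2r}` on `x > -r`, the series may be differentiated termwise, and
`R_N'` becomes a series of nonnegative Poisson terms `w_j e^{-x} x^{N+1+j}/(N+1+j)!`. As also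
`R_N ≤ 0` on `[0, ∞)`, `|R_N| = -R_N` is non-increasing there.
-/

open Real
open scoped Nat

noncomputable def expPartialSum (n : ℕ) (x : ℝ) : ℝ :=
  ∑ j ∈ range (n + 1), x ^ j / j !

theorem expPartialSum_zero_right (n : ℕ) : expPartialSum n 0 = 1 := by
  simp [expPartialSum, sum_range_succ']

theorem expPartialSum_nonneg (n : ℕ) {x : ℝ} (hx : 0 ≤ x) : 0 ≤ expPartialSum n x :=
  sum_nonneg fun _ _ => by positivity

theorem hasDerivAt_pow_succ_div_factorial (n : ℕ) (x : ℝ) :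
    HasDerivAt (fun x : ℝ => x ^ (n + 1) / (n + 1)!) (x ^ n / n !) x := by
  refine ((hasDerivAt_pow (n + 1) x).div_const ((n + 1)! : ℝ)).congr_deriv ?_
  rw [Nat.factorial_succ]
  push_cast
  field_simp

theorem hasDerivAt_expPartialSum (n : ℕ) (x : ℝ) :
    HasDerivAt (expPartialSum n) (∑ j ∈ range n, x ^ j / j !) x := by
  induction n with
  | zero =>
    have hone : expPartialSum 0 = fun _ => 1 := funext fun x => by simp [expPartialSum]
    simpa [hone] using hasDerivAt_const x (1 : ℝ)
  | succ n ih =>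
    have hsucc : expPartialSum (n + 1) = fun x => expPartialSum n x + x ^ (n + 1) / (n + 1)! :=
      funext fun x => sum_range_succ _ _
    rw [hsucc, sum_range_succ]
    exact ih.add (hasDerivAt_pow_succ_div_factorial n x)

theorem hasDerivAt_exp_neg_mul_expPartialSum (n : ℕ) (x : ℝ) :
    HasDerivAt (fun x => exp (-x) * expPartialSum n x) (-(exp (-x) * (x ^ n / n !))) x := by
  refine ((hasDerivAt_neg x).exp.fun_mul (hasDerivAt_expPartialSum n x)).congr_deriv ?_
  rw [expPartialSum, sum_range_succ]
  ring

theorem abs_exp_neg_mul_pow_div_factorial_le (n : ℕ) (x : ℝ) :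
    |exp (-x) * (x ^ n / n !)| ≤ exp (|x| - x) := by
  calc |exp (-x) * (x ^ n / n !)| = exp (-x) * (|x| ^ n / n !) := by
        rw [abs_mul, abs_exp, abs_div, abs_pow, Nat.abs_cast]
    _ ≤ exp (-x) * exp |x| := by gcongr; exact pow_div_factorial_le_exp _ (abs_nonneg x) n
    _ = exp (|x| - x) := by rw [← exp_add]; ring_nf

theorem hasDerivAt_tsum_mul_exp_neg_mul_expPartialSum {a : ℕ → ℝ} (ha : Summable a)
    (m : ℕ → ℕ) (x : ℝ) :
    HasDerivAt (fun x => ∑' j, a j * (exp (-x) * expPartialSum (m j) x))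
      (∑' j, a j * -(exp (-x) * (x ^ m j / (m j)!))) x := by
  set r := |x| + 1
  have hbound : ∀ j z, z ∈ Set.Ioi (-r) →
      ‖a j * -(exp (-z) * (z ^ m j / (m j)!))‖ ≤ |a j| * exp (2 * r) := by
    intro j z hz
    rw [norm_mul, norm_neg, Real.norm_eq_abs, Real.norm_eq_abs]
    gcongr
    refine (abs_exp_neg_mul_pow_div_factorial_le _ z).trans (exp_le_exp.mpr ?_)
    cases abs_cases z <;> linarith [Set.mem_Ioi.mp hz, abs_nonneg x]
  refine hasDerivAt_tsum_of_isPreconnected (ha.abs.mul_right _) isOpen_Ioi isPreconnected_Ioi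
    (fun j z _ => (hasDerivAt_exp_neg_mul_expPartialSum (m j) z).const_mul (a j)) hbound
    (y₀ := 0) (by simp only [Set.mem_Ioi, r]; linarith [abs_nonneg x]) ?_
    (by simp only [Set.mem_Ioi, r]; linarith [neg_abs_le x])
  simpa [expPartialSum_zero_right] using ha

theorem exp_neg_mul_pow_div_factorial_le_one (n : ℕ) {x : ℝ} (hx : 0 ≤ x) :
    exp (-x) * (x ^ n / n !) ≤ 1 := by
  simpa [abs_of_nonneg hx] using (le_abs_self _).trans (abs_exp_neg_mul_pow_div_factorial_le n x)

noncomputable def residualWeight (η : ℝ) (kap n : ℕ) : ℝ :=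
  (η ^ 2) ^ (n + 1 - kap) / (n + 1 - kap)!

theorem residualWeight_nonneg (η : ℝ) (kap n : ℕ) : 0 ≤ residualWeight η kap n := by
  unfold residualWeight
  positivity

theorem summable_residualWeight (η : ℝ) {kap N : ℕ} (hN : kap ≤ N + 2) :
    Summable fun j => residualWeight η kap (N + 1 + j) :=
  (summable_pow_div_factorial _).comp_injective fun i j h => by omega

section Residual

variable {lam : ℝ} {kap N : ℕ}

theorem gd_eq (hlam : lam ≠ 0) (y : ℝ) (n : ℕ) :
    gd lam y n = -(lam ^ (n + 1) * n ! * expPartialSum n (y / lam)) := by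
  rw [gd, neg_mul, ← sum_range_reflect, expPartialSum, mul_sum, mul_sum, neg_inj]
  refine sum_congr rfl fun j hj => ?_
  have hj : j ≤ n := Nat.lt_succ_iff.mp (mem_range.mp hj)
  rw [show n + 1 - 1 - j = n - j by omega, Nat.sub_sub_self hj, div_pow,
    pow_succ, ← pow_mul_pow_sub lam hj]
  field_simp

theorem trm_eq (hlam : lam ≠ 0) (η y : ℝ) {n : ℕ} (h : kap ≤ n + 1) :
    trm lam η y kap n = -(lam ^ kap * residualWeight η kap n * expPartialSum n (y / lam)) := by
  rw [trm, residualWeight, gd_eq hlam, div_pow, ← pow_mul_pow_sub lam h]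
  field_simp

theorem Rres_eq (hlam : lam ≠ 0) (η : ℝ) (hN : kap ≤ N + 2) (y : ℝ) :
    Rres lam η kap N y = -exp (-η ^ 2) * ∑' j, residualWeight η kap (N + 1 + j)
      * (exp (-(y / lam)) * expPartialSum (N + 1 + j) (y / lam)) := by
  have hterm (j : ℕ) : trm lam η y kap (N + 1 + j) = -lam ^ kap * (exp (-(y / lam)))⁻¹
      * (residualWeight η kap (N + 1 + j)
        * (exp (-(y / lam)) * expPartialSum (N + 1 + j) (y / lam))) := by
    rw [trm_eq hlam η y (by omega)]
    field_simp
  rw [Rres, tsum_congr hterm, tsum_mul_left, neg_div]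
  field_simp

theorem hasDerivAt_Rres (hlam : lam ≠ 0) (η : ℝ) (hN : kap ≤ N + 2) (y : ℝ) :
    HasDerivAt (Rres lam η kap N)
      (exp (-η ^ 2) / lam * ∑' j, residualWeight η kap (N + 1 + j)
        * (exp (-(y / lam)) * ((y / lam) ^ (N + 1 + j) / (N + 1 + j)!))) y := by
  have hS := (hasDerivAt_tsum_mul_exp_neg_mul_expPartialSum (summable_residualWeight η hN)
    (fun j => N + 1 + j) (y / lam)).comp y ((hasDerivAt_id y).div_const lam)
  rw [funext (Rres_eq hlam η hN)]
  refine (hS.const_mul (-exp (-η ^ 2))).congr_deriv ?_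
  simp only [mul_neg, tsum_neg]
  ring

theorem deriv_Rres (hlam : lam ≠ 0) (η : ℝ) (hN : kap ≤ N + 2) (y : ℝ) :
    deriv (Rres lam η kap N) y = exp (-η ^ 2) / lam ^ kap * exp (-y / lam)
      * ∑' n : ℕ, (η ^ 2 / lam) ^ (N + 1 + n + 1 - kap) * y ^ (N + 1 + n)
        / ((N + 1 + n)! * (N + 1 + n + 1 - kap)!) := by
  rw [(hasDerivAt_Rres hlam η hN y).deriv, ← tsum_mul_left, ← tsum_mul_left]
  refine tsum_congr fun j => ?_
  have hpow : lam ^ (N + 1 + j) = lam ^ kap * lam ^ (N + 1 + j + 1 - kap) / lam := by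
    rw [pow_mul_pow_sub lam (by omega), pow_succ]
    field_simp
  rw [residualWeight, div_pow, div_pow, hpow, neg_div]
  field_simp

theorem residualWeight_mul_poisson_nonneg (hlam : 0 < lam) (η : ℝ) {y : ℝ} (hy : 0 ≤ y)
    (j : ℕ) : 0 ≤ residualWeight η kap (N + 1 + j)
      * (exp (-(y / lam)) * ((y / lam) ^ (N + 1 + j) / (N + 1 + j)!)) := by
  have := residualWeight_nonneg η kap (N + 1 + j)
  positivity

theorem deriv_Rres_nonneg (hlam : 0 < lam) (η : ℝ) (hN : kap ≤ N + 2) {y : ℝ} (hy : 0 ≤ y) :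
    0 ≤ deriv (Rres lam η kap N) y := by
  rw [(hasDerivAt_Rres hlam.ne' η hN y).deriv]
  exact mul_nonneg (by positivity) (tsum_nonneg (residualWeight_mul_poisson_nonneg hlam η hy))

theorem deriv_Rres_pos (hlam : 0 < lam) {η : ℝ} (hη : 0 < η) (hN : kap ≤ N + 2) {y : ℝ}
    (hy : 0 < y) : 0 < deriv (Rres lam η kap N) y := by
  have hsum : Summable fun j => residualWeight η kap (N + 1 + j)
      * (exp (-(y / lam)) * ((y / lam) ^ (N + 1 + j) / (N + 1 + j)!)) :=
    (summable_residualWeight η hN).of_nonneg_of_le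
      (residualWeight_mul_poisson_nonneg hlam η hy.le) fun j =>
        mul_le_of_le_one_right (residualWeight_nonneg η kap _)
          (exp_neg_mul_pow_div_factorial_le_one _ (by positivity))
  rw [(hasDerivAt_Rres hlam.ne' η hN y).deriv]
  refine mul_pos (by positivity) (hsum.tsum_pos (residualWeight_mul_poisson_nonneg hlam η hy.le)
    0 (mul_pos ?_ (by positivity)))
  unfold residualWeight
  positivity

theorem Rres_nonpos (hlam : 0 < lam) (η : ℝ) (hN : kap ≤ N + 2) {y : ℝ} (hy : 0 ≤ y) :
    Rres lam η kap N y ≤ 0 := by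
  rw [Rres_eq hlam.ne' η hN]
  refine mul_nonpos_of_nonpos_of_nonneg (neg_nonpos.mpr (exp_pos _).le) (tsum_nonneg fun j => ?_)
  have := residualWeight_nonneg η kap (N + 1 + j)
  have := expPartialSum_nonneg (N + 1 + j) (div_nonneg hy hlam.le)
  positivity

theorem monotoneOn_Rres (hlam : 0 < lam) (η : ℝ) (hN : kap ≤ N + 2) :
    MonotoneOn (Rres lam η kap N) (Set.Ici 0) := by
  have hdiff : Differentiable ℝ (Rres lam η kap N) :=
    fun y => (hasDerivAt_Rres hlam.ne' η hN y).differentiableAt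
  refine monotoneOn_of_deriv_nonneg (convex_Ici 0) hdiff.continuous.continuousOn
    hdiff.differentiableOn fun y hy => deriv_Rres_nonneg hlam η hN ?_
  rw [interior_Ici] at hy
  exact le_of_lt hy

end Residual

theorem stmt8_general (lam η : ℝ) (hlam : 0 < lam) (kap N : ℕ) (hN : kap ≤ N + 2) :
    (∀ y : ℝ, 0 ≤ y →
        deriv (Rres lam η kap N) y
          = Real.exp (-η ^ 2) / lam ^ kap * Real.exp (-y / lam)
              * ∑' n : ℕ, (η ^ 2 / lam) ^ (N + 1 + n + 1 - kap) * y ^ (N + 1 + n)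
                  / (((N + 1 + n).factorial : ℝ) * ((N + 1 + n + 1 - kap).factorial : ℝ)))
    ∧ (∀ y : ℝ, 0 ≤ y → 0 ≤ deriv (Rres lam η kap N) y)
    ∧ (∀ y : ℝ, 0 < y → 0 < η → 0 < deriv (Rres lam η kap N) y)
    ∧ (∀ y₁ y₂ : ℝ, 0 ≤ y₁ → y₁ ≤ y₂ →
        |Rres lam η kap N y₂| ≤ |Rres lam η kap N y₁|) := by
  refine ⟨fun y _ => deriv_Rres hlam.ne' η hN y, fun y hy => deriv_Rres_nonneg hlam η hN hy,
    fun y hy hη => deriv_Rres_pos hlam hη hN hy, fun y₁ y₂ hy₁ h12 => ?_⟩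
  have hy₂ : 0 ≤ y₂ := hy₁.trans h12
  rw [abs_of_nonpos (Rres_nonpos hlam η hN hy₂), abs_of_nonpos (Rres_nonpos hlam η hN hy₁)]
  exact neg_le_neg (monotoneOn_Rres hlam η hN hy₁ hy₂ h12)

/-- The derivative of the residual:
`∂R_N(y)/∂y = (e^{-η²}/λ^κ) e^{-y/λ} ∑_{n=N+1}^∞ (η²/λ)^{n-κ+1} yⁿ/(n!(n-κ+1)!)`,
which is nonnegative for `y ≥ 0` and strictly positive when `y > 0` and `η > 0`;
hence `|R_N(y)|` is monotonically non-increasing in `y`. -/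
theorem stmt8 (lam η : ℝ) (hlam : 0 < lam) (hη : 0 ≤ η) (kap N : ℕ)
    (hkap : 1 ≤ kap) (hN : kap ≤ N + 2)
    (hsum : ∀ y : ℝ, 0 ≤ y → Summable (fun n : ℕ => trm lam η y kap n)) :
    (∀ y : ℝ, 0 ≤ y →
        deriv (Rres lam η kap N) y
          = Real.exp (-η ^ 2) / lam ^ kap * Real.exp (-y / lam)
              * ∑' n : ℕ, (η ^ 2 / lam) ^ (N + 1 + n + 1 - kap) * y ^ (N + 1 + n)
                  / (((N + 1 + n).factorial : ℝ) * ((N + 1 + n + 1 - kap).factorial : ℝ)))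
    ∧ (∀ y : ℝ, 0 ≤ y → 0 ≤ deriv (Rres lam η kap N) y)
    ∧ (∀ y : ℝ, 0 < y → 0 < η → 0 < deriv (Rres lam η kap N) y)
    ∧ (∀ y₁ y₂ : ℝ, 0 ≤ y₁ → y₁ ≤ y₂ →
        |Rres lam η kap N y₂| ≤ |Rres lam η kap N y₁|) :=
  stmt8_general lam η hlam kap N hN
end
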